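/- arXiv:1209.2723 — 2 statements merged into one kernel-verified Lean document; each statement's English description precedes it below -/
import Mathlib

section
/- Let ξ_0, ..., ξ_n be elements of a commutative ring R, and consider the function ν ↦ (Σ_{ℓ=0}^n ν_ℓ ξ_ℓ)^k from (ℕ∪{0})^(n+1) to R. Applying k difference operators Δ_{r_1,s_1}, ..., Δ_{r_k,s_k} (with r_j ≠ s_j) to this function yields the constant function k! · ∏_{ℓ=1}^k (ξ_{r_ℓ} - ξ_{s_ℓ}). -/
/-!
Writing `L ν = ∑ ℓ, ν ℓ * ξ ℓ`, we have `L (ν + e_p) = L ν + ξ p`, so `Δ_{p,q}` sends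
`ν ↦ P (L ν)` to `ν ↦ Q (L ν)` with `Q = P(X + ξ p) - P(X + ξ q)`. Passing from `P` to `Q` lowers
the degree by one and turns the coefficient of `X ^ (m + 1)` into `(m + 1) (ξ p - ξ q)` times
itself. Starting from `X ^ k`, after `k` steps only the constant `k! ∏ (ξ r_ℓ - ξ s_ℓ)` is left.
-/

open Polynomial

/-- The difference operator `(Δ_{p,q} F)(ν) = F(ν + e_p) - F(ν + e_q)` on functions
of multi-indices of nonnegative integers. -/
def deltaOpN {n : ℕ} {R : Type*} [CommRing R] (p q : Fin (n + 1))
    (F : (Fin (n + 1) → ℕ) → R) : (Fin (n + 1) → ℕ) → R :=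
  fun ν => F (fun i => ν i + if i = p then 1 else 0)
    - F (fun i => ν i + if i = q then 1 else 0)

namespace Polynomial

variable {R : Type*} [CommRing R] {P : R[X]} {m : ℕ}

theorem natDegree_taylor_sub_taylor_le (hP : P.natDegree ≤ m + 1) (a b : R) :
    (taylor a P - taylor b P).natDegree ≤ m := by
  refine natDegree_le_iff_coeff_eq_zero.mpr fun N hN => ?_
  have hconst : (hasseDeriv N P).natDegree ≤ 0 :=
    (natDegree_hasseDeriv_le P N).trans (by omega)
  rw [coeff_sub, taylor_coeff, taylor_coeff, eq_C_of_natDegree_le_zero hconst]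
  simp

theorem coeff_taylor_sub_taylor (hP : P.natDegree ≤ m + 1) (a b : R) :
    (taylor a P - taylor b P).coeff m = (m + 1) * P.coeff (m + 1) * (a - b) := by
  have hlin : (hasseDeriv m P).natDegree ≤ 1 :=
    (natDegree_hasseDeriv_le P m).trans (by omega)
  rw [coeff_sub, taylor_coeff, taylor_coeff, eq_X_add_C_of_natDegree_le_one hlin]
  simp only [eval_add, eval_mul, eval_C, eval_X, hasseDeriv_coeff, Nat.add_comm 1 m]
  push_cast [Nat.choose_succ_self_right]
  ring

end Polynomial

theorem sum_natCast_add_single_mul {ι R : Type*} [Fintype ι] [DecidableEq ι] [CommRing R]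
    (ξ : ι → R) (ν : ι → ℕ) (p : ι) :
    ∑ ℓ, (((ν ℓ + if ℓ = p then 1 else 0 : ℕ)) : R) * ξ ℓ = ∑ ℓ, (ν ℓ : R) * ξ ℓ + ξ p := by
  push_cast
  simp [add_mul, Finset.sum_add_distrib]

section IteratedDifference

variable {n : ℕ} {R : Type*} [CommRing R] (ξ : Fin (n + 1) → R)

theorem deltaOpN_eval_sum_mul (p q : Fin (n + 1)) (P : R[X]) :
    deltaOpN p q (fun ν => P.eval (∑ ℓ, (ν ℓ : R) * ξ ℓ))
      = fun ν => (taylor (ξ p) P - taylor (ξ q) P).eval (∑ ℓ, (ν ℓ : R) * ξ ℓ) := by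
  funext ν
  simp only [deltaOpN, eval_sub, taylor_eval, sum_natCast_add_single_mul]

theorem foldr_deltaOpN_eval_sum_mul (m : ℕ) (P : R[X]) (hP : P.natDegree ≤ m)
    (r s : Fin m → Fin (n + 1)) (ν : Fin (n + 1) → ℕ) :
    (List.finRange m).foldr (fun j H => deltaOpN (r j) (s j) H)
        (fun ν => P.eval (∑ ℓ, (ν ℓ : R) * ξ ℓ)) ν
      = m.factorial * P.coeff m * ∏ ℓ, (ξ (r ℓ) - ξ (s ℓ)) := by
  induction m generalizing P with
  | zero =>
    rw [eq_C_of_natDegree_le_zero hP]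
    simp
  | succ m ih =>
    -- the last operator in the list is the first one applied to `ν ↦ P (L ν)`
    rw [List.finRange_succ_last, List.foldr_append, List.foldr_map, List.foldr_cons, List.foldr_nil,
      deltaOpN_eval_sum_mul, ih _ (Polynomial.natDegree_taylor_sub_taylor_le hP _ _),
      Polynomial.coeff_taylor_sub_taylor hP, Fin.prod_univ_castSucc, Nat.factorial_succ]
    push_cast
    ring

end IteratedDifference

theorem iterated_delta_pow_linear_general
    (n k : ℕ) (R : Type*) [CommRing R]
    (ξ : Fin (n + 1) → R)
    (r s : Fin k → Fin (n + 1)) :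
    ∀ ν : Fin (n + 1) → ℕ,
      ((List.finRange k).foldr (fun j H => deltaOpN (r j) (s j) H)
        (fun ν : Fin (n + 1) → ℕ => (∑ ℓ, ((ν ℓ : ℕ) : R) * ξ ℓ) ^ k)) ν
      = (k.factorial : R) * ∏ ℓ : Fin k, (ξ (r ℓ) - ξ (s ℓ)) := by
  intro ν
  simpa using foldr_deltaOpN_eval_sum_mul ξ k (X ^ k) (natDegree_X_pow_le k) r s ν

/-- Applying `k` difference operators `Δ_{r_1,s_1}, …, Δ_{r_k,s_k}` (with `r_j ≠ s_j`)
to the function `ν ↦ (∑_ℓ ν_ℓ ξ_ℓ)^k` yields the constant function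
`k! ∏_{ℓ=1}^k (ξ_{r_ℓ} - ξ_{s_ℓ})`. -/
theorem iterated_delta_pow_linear
    (n k : ℕ) (R : Type*) [CommRing R]
    (ξ : Fin (n + 1) → R)
    (r s : Fin k → Fin (n + 1)) (hrs : ∀ j, r j ≠ s j) :
    ∀ ν : Fin (n + 1) → ℕ,
      ((List.finRange k).foldr (fun j H => deltaOpN (r j) (s j) H)
        (fun ν : Fin (n + 1) → ℕ => (∑ ℓ, ((ν ℓ : ℕ) : R) * ξ ℓ) ^ k)) ν
      = (k.factorial : R) * ∏ ℓ : Fin k, (ξ (r ℓ) - ξ (s ℓ)) :=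
  iterated_delta_pow_linear_general n k R ξ r s
end

section
/- Define Φ^(k)_ν inductively by Φ^(0)_ν = 1 and Φ^(k+1)_ν = (Σ_{ℓ=0}^n ν_ℓ ξ^(1)_ℓ)·Φ^(k)_ν + Σ_{ℓ=0}^n Σ_{i=1}^k ξ^(i+1)_ℓ · ∂Φ^(k)_ν/∂ξ^(i)_ℓ, where ξ^(i)_ℓ are independent variables and ν = (ν_0,...,ν_n) a multi-index. Then for each k, viewing Φ^(k)_ν as a polynomial in ν_0,...,ν_n, the difference Φ^(k)_ν − (Σ_{ℓ=0}^n ν_ℓ ξ^(1)_ℓ)^k has degree at most k−1 in ν. -/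
/-!
Write `S = Σ_ℓ ν_ℓ ξ^(1)_ℓ` and `D_k = Σ_ℓ Σ_{i=1}^k ξ^(i+1)_ℓ ∂/∂ξ^(i)_ℓ`, so that
`Φ^(k+1) = S Φ^(k) + D_k Φ^(k)`. The operator `D_k` only multiplies by and differentiates in
the `ξ`-variables, so it does not raise the degree in `ν`; hence `Φ^(k)` has `ν`-degree at most `k`.
Then `Φ^(k+1) - S^(k+1) = S (Φ^(k) - S^k) + D_k Φ^(k)`, and induction on `k` bounds both terms
by `k` (the first vanishes when `k = 0`, where `k - 1` truncates to `0`).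
-/

open MvPolynomial

namespace MvPolynomial

variable {R σ M : Type*} [CommSemiring R] [AddCommMonoid M] [SemilatticeSup M] [OrderBot M]
  {w : σ → M}

theorem weightedTotalDegree_add_le (p q : MvPolynomial σ R) :
    weightedTotalDegree w (p + q) ≤ weightedTotalDegree w p ⊔ weightedTotalDegree w q := by
  classical
  exact (Finset.sup_mono support_add).trans_eq Finset.sup_union

theorem weightedTotalDegree_sum_le {ι : Type*} (s : Finset ι) (f : ι → MvPolynomial σ R) :
    weightedTotalDegree w (∑ i ∈ s, f i) ≤ s.sup fun i => weightedTotalDegree w (f i) := by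
  classical
  exact (Finset.sup_mono support_sum).trans_eq (Finset.sup_biUnion _ _)

theorem weightedTotalDegree_X_le (i : σ) : weightedTotalDegree w (X i : MvPolynomial σ R) ≤ w i :=
  Finset.sup_le fun d hd => by
    rw [Finset.mem_singleton.mp (support_monomial_subset hd), Finsupp.weight_single, one_smul]

theorem weightedTotalDegree_one_le : weightedTotalDegree w (1 : MvPolynomial σ R) ≤ 0 :=
  Finset.sup_le fun d hd => by
    rw [Finset.mem_singleton.mp (support_monomial_subset hd), map_zero]

theorem weightedTotalDegree_mul_le [IsOrderedAddMonoid M] (p q : MvPolynomial σ R) :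
    weightedTotalDegree w (p * q) ≤ weightedTotalDegree w p + weightedTotalDegree w q := by
  classical
  refine Finset.sup_le fun d hd => ?_
  obtain ⟨a, ha, b, hb, rfl⟩ := Finset.mem_add.mp (support_mul p q hd)
  rw [map_add]
  exact add_le_add (le_weightedTotalDegree w ha) (le_weightedTotalDegree w hb)

theorem weightedTotalDegree_pderiv_le [CanonicallyOrderedAdd M] (i : σ) (p : MvPolynomial σ R) :
    weightedTotalDegree w (pderiv i p) ≤ weightedTotalDegree w p := by
  refine Finset.sup_le fun d hd => ?_
  have hd' : d + Finsupp.single i 1 ∈ p.support := by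
    rw [mem_support_iff, coeff_pderiv] at hd
    exact mem_support_iff.mpr (left_ne_zero_of_mul hd)
  calc Finsupp.weight w d ≤ Finsupp.weight w (d + Finsupp.single i 1) := by
        rw [map_add]; exact le_self_add
    _ ≤ weightedTotalDegree w p := le_weightedTotalDegree w hd'

end MvPolynomial

/-- The polynomials `Φ^(k)_ν` in the variables `ξ^(i)_ℓ` (indexed by
`Sum.inl (i-1, ℓ)`) and `ν_ℓ` (indexed by `Sum.inr ℓ`), defined by
`Φ^(0) = 1` and
`Φ^(k+1) = (Σ_ℓ ν_ℓ ξ^(1)_ℓ)·Φ^(k) + Σ_ℓ Σ_{i=1}^k ξ^(i+1)_ℓ ∂Φ^(k)/∂ξ^(i)_ℓ`. -/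
noncomputable def phiPoly (n : ℕ) : ℕ → MvPolynomial ((ℕ × Fin (n + 1)) ⊕ Fin (n + 1)) ℚ
  | 0 => 1
  | k + 1 =>
      (∑ ℓ : Fin (n + 1), X (Sum.inr ℓ) * X (Sum.inl (0, ℓ))) * phiPoly n k
        + ∑ ℓ : Fin (n + 1), ∑ i ∈ Finset.range k,
            X (Sum.inl (i + 1, ℓ)) * pderiv (Sum.inl (i, ℓ)) (phiPoly n k)

section PhiPolyRecursion

variable (n : ℕ)

abbrev XiNuPoly : Type := MvPolynomial ((ℕ × Fin (n + 1)) ⊕ Fin (n + 1)) ℚ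

def nuWeight : (ℕ × Fin (n + 1)) ⊕ Fin (n + 1) → ℕ := Sum.elim (fun _ => 0) (fun _ => 1)

noncomputable def nuDotXi : XiNuPoly n := ∑ ℓ : Fin (n + 1), X (Sum.inr ℓ) * X (Sum.inl (0, ℓ))

noncomputable def shiftDeriv (k : ℕ) (p : XiNuPoly n) : XiNuPoly n :=
  ∑ ℓ : Fin (n + 1), ∑ i ∈ Finset.range k, X (Sum.inl (i + 1, ℓ)) * pderiv (Sum.inl (i, ℓ)) p

theorem phiPoly_succ (k : ℕ) :
    phiPoly n (k + 1) = nuDotXi n * phiPoly n k + shiftDeriv n k (phiPoly n k) :=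
  rfl

theorem phiPoly_succ_sub_pow (k : ℕ) :
    phiPoly n (k + 1) - nuDotXi n ^ (k + 1)
      = nuDotXi n * (phiPoly n k - nuDotXi n ^ k) + shiftDeriv n k (phiPoly n k) := by
  rw [phiPoly_succ]
  ring

theorem weightedTotalDegree_nuDotXi_le : weightedTotalDegree (nuWeight n) (nuDotXi n) ≤ 1 :=
  (weightedTotalDegree_sum_le _ _).trans <| Finset.sup_le fun _ _ =>
    (weightedTotalDegree_mul_le _ _).trans <|
      add_le_add (weightedTotalDegree_X_le _) (weightedTotalDegree_X_le _)

theorem weightedTotalDegree_shiftDeriv_le (k : ℕ) (p : XiNuPoly n) :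
    weightedTotalDegree (nuWeight n) (shiftDeriv n k p) ≤ weightedTotalDegree (nuWeight n) p :=
  (weightedTotalDegree_sum_le _ _).trans <| Finset.sup_le fun _ _ =>
    (weightedTotalDegree_sum_le _ _).trans <| Finset.sup_le fun _ _ =>
      (weightedTotalDegree_mul_le _ _).trans <|
        (add_le_add (weightedTotalDegree_X_le _) (weightedTotalDegree_pderiv_le _ p)).trans_eq
          (zero_add _)

theorem weightedTotalDegree_phiPoly_le (k : ℕ) :
    weightedTotalDegree (nuWeight n) (phiPoly n k) ≤ k := by
  induction k with
  | zero => exact weightedTotalDegree_one_le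
  | succ k ih =>
    rw [phiPoly_succ]
    refine (weightedTotalDegree_add_le _ _).trans (sup_le ?_ ?_)
    · calc _ ≤ 1 + k := (weightedTotalDegree_mul_le _ _).trans
            (add_le_add (weightedTotalDegree_nuDotXi_le n) ih)
        _ = k + 1 := add_comm 1 k
    · exact (weightedTotalDegree_shiftDeriv_le n k _).trans (ih.trans k.le_succ)

end PhiPolyRecursion

/-- Viewed as a polynomial in the variables `ν_0, …, ν_n`, the difference
`Φ^(k)_ν − (Σ_ℓ ν_ℓ ξ^(1)_ℓ)^k` has degree at most `k − 1` in `ν`. -/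
theorem phiPoly_sub_pow_degree_le (n k : ℕ) :
    MvPolynomial.weightedTotalDegree
      (Sum.elim (fun _ => 0) (fun _ => 1) :
        ((ℕ × Fin (n + 1)) ⊕ Fin (n + 1)) → ℕ)
      (phiPoly n k
        - (∑ ℓ : Fin (n + 1), X (Sum.inr ℓ) * X (Sum.inl (0, ℓ))) ^ k)
      ≤ k - 1 := by
  change weightedTotalDegree (nuWeight n) (phiPoly n k - nuDotXi n ^ k) ≤ k - 1
  induction k with
  | zero => simp [phiPoly, weightedTotalDegree_zero]
  | succ k ih =>
    have hmul :
        weightedTotalDegree (nuWeight n) (nuDotXi n * (phiPoly n k - nuDotXi n ^ k)) ≤ k := by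
      cases k with
      | zero => simp [phiPoly, weightedTotalDegree_zero]
      | succ m =>
        calc _ ≤ 1 + m := (weightedTotalDegree_mul_le _ _).trans
                (add_le_add (weightedTotalDegree_nuDotXi_le n) ih)
          _ = m + 1 := add_comm 1 m
    rw [phiPoly_succ_sub_pow]
    exact (weightedTotalDegree_add_le _ _).trans <| sup_le hmul <|
      (weightedTotalDegree_shiftDeriv_le n k _).trans (weightedTotalDegree_phiPoly_le n k)
end
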